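/- arXiv:2411.01682 — 5 statements merged into one kernel-verified Lean document; each statement's English description precedes it below -/
import Mathlib

section
/- Let σ ∈ (1/2, 1), K ≥ 0, and let φ : (0, ∞) → ℝ be continuous with |φ(τ)| ≤ K·τ^{σ−1} for all τ > 0. Set u(x) := 𝒥[φ](|x|). Then there is a constant C = C(σ), depending only on σ, such that for every x ∈ ℝ² \ {0}: |u(x)| ≤ K|x|^{σ+1}/(σ+1)², |∇u(x)| ≤ K|x|^{σ}/(σ+1), and |∂²_{x_i x_j} u(x)| ≤ C·K·|x|^{σ−1} for all i, j ∈ {1, 2}. -/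
/-!
Write `G(r) = ∫₀^r τ φ(τ) dτ`, so that `𝒥[φ]' = G / r` and `G' = r φ`. Integrating the bound
`|τ φ(τ)| ≤ K τ^σ` gives `|G(r)| ≤ K r^{σ+1}/(σ+1)`, and integrating `|G(ρ)/ρ|` once more gives
the bound on `u`. A radial function `u = J(|x|)` with `J'(r) = r h(r)` has
`∂_w u(y) = h(|y|) ⟪w, y⟫`, hence `∂_v ∂_w u(x) = h(r) ⟪w, v⟫ + (h'(r)/r) ⟪w, x⟫ ⟪x, v⟫` and
`|∂_v ∂_w u(x)| ≤ |h(r)| + r |h'(r)|` for unit `v, w`. Here `h = G / r²` and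
`h' = φ / r - 2 h / r`, which yields the constant `C = 1 + 3/(σ+1)`.
-/

open MeasureTheory

noncomputable section

/-- `ℝ²` as a Euclidean space. -/
abbrev E2 : Type := EuclideanSpace ℝ (Fin 2)

/-- The radial inverse Laplacian `𝒥[φ](r) = ∫₀^r ρ⁻¹ (∫₀^ρ τ φ(τ) dτ) dρ`. -/
def calJ (φ : ℝ → ℝ) (r : ℝ) : ℝ :=
  ∫ ρ in Set.Ioc (0 : ℝ) r, (∫ τ in Set.Ioc (0 : ℝ) ρ, τ * φ τ) / ρ

/-- Partial derivative in the `i`-th coordinate direction. -/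
def pd (i : Fin 2) (u : E2 → ℝ) (y : E2) : ℝ :=
  fderiv ℝ u y (EuclideanSpace.single i 1)

open Set
open scoped RealInnerProductSpace

section RadialCalculus

variable {E : Type*} [NormedAddCommGroup E] [InnerProductSpace ℝ E] {x : E}

theorem hasFDerivAt_norm_of_ne_zero (hx : x ≠ 0) :
    HasFDerivAt (‖·‖) (‖x‖⁻¹ • innerSL ℝ x) x := by
  have hsq : (0 : ℝ) < ‖x‖ ^ 2 := by positivity
  have h := (Real.hasDerivAt_sqrt hsq.ne').comp_hasFDerivAt x
    (hasStrictFDerivAt_norm_sq x).hasFDerivAt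
  simp only [Function.comp_def, Real.sqrt_sq (norm_nonneg _)] at h
  refine h.congr_fderiv ?_
  ext v
  simp only [smul_apply, innerSL_apply_apply, smul_eq_mul, nsmul_eq_mul, Nat.cast_ofNat]
  field_simp

theorem HasDerivAt.hasFDerivAt_comp_norm {f : ℝ → ℝ} {f' : ℝ} (hx : x ≠ 0)
    (hf : HasDerivAt f f' ‖x‖) :
    HasFDerivAt (fun y => f ‖y‖) ((f' / ‖x‖) • innerSL ℝ x) x := by
  refine (hf.comp_hasFDerivAt x (hasFDerivAt_norm_of_ne_zero hx)).congr_fderiv ?_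
  rw [smul_smul, div_eq_mul_inv]

theorem norm_gradient_comp_norm [CompleteSpace E] {f : ℝ → ℝ} {f' : ℝ} (hx : x ≠ 0)
    (hf : HasDerivAt f f' ‖x‖) : ‖gradient (fun y => f ‖y‖) x‖ = |f'| := by
  rw [← (InnerProductSpace.toDual ℝ E).norm_map, toDual_gradient,
    (hf.hasFDerivAt_comp_norm hx).fderiv, norm_smul, innerSL_apply_norm, Real.norm_eq_abs,
    abs_div, abs_norm, div_mul_cancel₀ _ (norm_ne_zero_iff.2 hx)]

variable {J h : ℝ → ℝ} (hJ : ∀ r > 0, HasDerivAt J (r * h r) r)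
include hJ

theorem fderiv_comp_norm_apply {y : E} (hy : y ≠ 0) (w : E) :
    fderiv ℝ (fun z => J ‖z‖) y w = h ‖y‖ * ⟪w, y⟫ := by
  rw [((hJ _ (norm_pos_iff.2 hy)).hasFDerivAt_comp_norm hy).fderiv, smul_apply,
    innerSL_apply_apply, smul_eq_mul, mul_div_cancel_left₀ _ (norm_ne_zero_iff.2 hy),
    real_inner_comm]

theorem hasFDerivAt_fderiv_comp_norm_apply {h' : ℝ} (hx : x ≠ 0) (hh : HasDerivAt h h' ‖x‖)
    (w : E) :
    HasFDerivAt (fun y => fderiv ℝ (fun z => J ‖z‖) y w)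
      (h ‖x‖ • innerSL ℝ w + ⟪w, x⟫ • (h' / ‖x‖) • innerSL ℝ x) x := by
  have heq : (fun y => fderiv ℝ (fun z => J ‖z‖) y w) =ᶠ[nhds x] fun y => h ‖y‖ * ⟪w, y⟫ := by
    filter_upwards [isOpen_compl_singleton.mem_nhds hx] with y hy
    exact fderiv_comp_norm_apply hJ hy w
  exact ((hh.hasFDerivAt_comp_norm hx).mul (innerSL ℝ w).hasFDerivAt).congr_of_eventuallyEq heq

theorem abs_fderiv_fderiv_comp_norm_apply_le {h' : ℝ} (hx : x ≠ 0) (hh : HasDerivAt h h' ‖x‖)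
    (v w : E) :
    |fderiv ℝ (fun y => fderiv ℝ (fun z => J ‖z‖) y w) x v|
      ≤ (|h ‖x‖| + |h'| * ‖x‖) * (‖v‖ * ‖w‖) := by
  rw [(hasFDerivAt_fderiv_comp_norm_apply hJ hx hh w).fderiv]
  simp only [add_apply, smul_apply, innerSL_apply_apply, smul_eq_mul]
  have hr : ‖x‖ ≠ 0 := norm_ne_zero_iff.2 hx
  calc |h ‖x‖ * ⟪w, v⟫ + ⟪w, x⟫ * (h' / ‖x‖ * ⟪x, v⟫)|
      ≤ |h ‖x‖| * |⟪w, v⟫| + |⟪w, x⟫| * (|h'| / ‖x‖ * |⟪x, v⟫|) := by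
        refine (abs_add_le _ _).trans_eq ?_
        rw [abs_mul, abs_mul, abs_mul, abs_div, abs_norm]
    _ ≤ |h ‖x‖| * (‖w‖ * ‖v‖) + ‖w‖ * ‖x‖ * (|h'| / ‖x‖ * (‖x‖ * ‖v‖)) := by
        gcongr <;> exact abs_real_inner_le_norm _ _
    _ = (|h ‖x‖| + |h'| * ‖x‖) * (‖v‖ * ‖w‖) := by
        field_simp

end RadialCalculus

section PowerBounded

variable {f : ℝ → ℝ} {c s r : ℝ}

theorem intervalIntegrable_of_abs_le_rpow (hs : -1 < s) (hf : ContinuousOn f (Ioi 0))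
    (hb : ∀ τ > 0, |f τ| ≤ c * τ ^ s) (hr : 0 ≤ r) :
    IntervalIntegrable f volume 0 r := by
  rw [intervalIntegrable_iff_integrableOn_Ioc_of_le hr]
  have hg := ((intervalIntegral.intervalIntegrable_rpow' hs (a := 0) (b := r)).const_mul c)
  rw [intervalIntegrable_iff_integrableOn_Ioc_of_le hr] at hg
  refine hg.mono' ((hf.mono Ioc_subset_Ioi_self).aestronglyMeasurable measurableSet_Ioc) ?_
  filter_upwards [ae_restrict_mem measurableSet_Ioc] with τ hτ
  exact hb τ hτ.1

theorem abs_integral_le_of_abs_le_rpow (hs : -1 < s) (hb : ∀ τ > 0, |f τ| ≤ c * τ ^ s)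
    (hr : 0 ≤ r) :
    |∫ τ in (0)..r, f τ| ≤ c * r ^ (s + 1) / (s + 1) := by
  have hbound : ∫ τ in (0)..r, c * τ ^ s = c * r ^ (s + 1) / (s + 1) := by
    rw [intervalIntegral.integral_const_mul, integral_rpow (Or.inl hs),
      Real.zero_rpow (by linarith), sub_zero, mul_div_assoc]
  rw [← hbound]
  exact intervalIntegral.norm_integral_le_of_norm_le (f := f) hr
    (Filter.Eventually.of_forall fun τ hτ => hb τ hτ.1)
    ((intervalIntegral.intervalIntegrable_rpow' hs).const_mul c)

theorem hasDerivAt_integral_of_abs_le_rpow (hs : -1 < s) (hf : ContinuousOn f (Ioi 0))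
    (hb : ∀ τ > 0, |f τ| ≤ c * τ ^ s) (hr : 0 < r) :
    HasDerivAt (fun t => ∫ τ in (0)..t, f τ) (f r) r :=
  intervalIntegral.integral_hasDerivAt_right (intervalIntegrable_of_abs_le_rpow hs hf hb hr.le)
    (AEStronglyMeasurable.stronglyMeasurableAtFilter_of_mem
      (hf.aestronglyMeasurable measurableSet_Ioi) (isOpen_Ioi.mem_nhds hr))
    (hf.continuousAt (isOpen_Ioi.mem_nhds hr))

end PowerBounded

def calG (φ : ℝ → ℝ) (r : ℝ) : ℝ :=
  ∫ τ in (0)..r, τ * φ τ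

theorem calJ_eq_integral_calG_div {φ : ℝ → ℝ} {r : ℝ} (hr : 0 ≤ r) :
    calJ φ r = ∫ ρ in (0)..r, calG φ ρ / ρ := by
  rw [calJ, intervalIntegral.integral_of_le hr]
  refine setIntegral_congr_fun measurableSet_Ioc fun ρ hρ => ?_
  rw [calG, intervalIntegral.integral_of_le hρ.1.le]

section CalJ

variable {σ K r : ℝ} {φ : ℝ → ℝ} (hσ : -1 < σ) (hφ : ContinuousOn φ (Ioi 0))
  (hb : ∀ τ > 0, |φ τ| ≤ K * τ ^ (σ - 1))
include hσ hb

omit hσ in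
theorem abs_mul_apply_le_rpow : ∀ τ > 0, |τ * φ τ| ≤ K * τ ^ σ := by
  intro τ hτ
  calc |τ * φ τ| = τ * |φ τ| := by rw [abs_mul, abs_of_pos hτ]
    _ ≤ τ * (K * τ ^ (σ - 1)) := by gcongr; exact hb τ hτ
    _ = K * τ ^ σ := by rw [Real.rpow_sub_one hτ.ne']; field_simp

theorem abs_calG_le (hr : 0 ≤ r) : |calG φ r| ≤ K * r ^ (σ + 1) / (σ + 1) :=
  abs_integral_le_of_abs_le_rpow hσ (abs_mul_apply_le_rpow hb) hr

include hφ

theorem hasDerivAt_calG (hr : 0 < r) : HasDerivAt (calG φ) (r * φ r) r :=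
  hasDerivAt_integral_of_abs_le_rpow hσ (continuousOn_id.mul hφ) (abs_mul_apply_le_rpow hb) hr

omit hφ in
theorem abs_calG_div_le : ∀ ρ > 0, |calG φ ρ / ρ| ≤ K / (σ + 1) * ρ ^ σ := by
  intro ρ hρ
  rw [abs_div, abs_of_pos hρ, div_le_iff₀ hρ]
  calc |calG φ ρ| ≤ K * ρ ^ (σ + 1) / (σ + 1) := abs_calG_le hσ hb hρ.le
    _ = K / (σ + 1) * ρ ^ σ * ρ := by rw [Real.rpow_add_one hρ.ne']; ring

theorem continuousOn_calG_div : ContinuousOn (fun ρ => calG φ ρ / ρ) (Ioi 0) := fun _ hρ =>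
  ((hasDerivAt_calG hσ hφ hb hρ).continuousAt.div continuousAt_id hρ.ne').continuousWithinAt

omit hφ in
theorem abs_calJ_le (hr : 0 ≤ r) : |calJ φ r| ≤ K * r ^ (σ + 1) / (σ + 1) ^ 2 := by
  rw [calJ_eq_integral_calG_div hr]
  refine (abs_integral_le_of_abs_le_rpow hσ (abs_calG_div_le hσ hb) hr).trans_eq ?_
  field_simp

theorem hasDerivAt_calJ (hr : 0 < r) : HasDerivAt (calJ φ) (calG φ r / r) r := by
  have heq : (fun t => ∫ ρ in (0)..t, calG φ ρ / ρ) =ᶠ[nhds r] calJ φ := by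
    filter_upwards [Ioi_mem_nhds hr] with t ht
    exact (calJ_eq_integral_calG_div ht.le).symm
  exact (hasDerivAt_integral_of_abs_le_rpow hσ (continuousOn_calG_div hσ hφ hb)
    (abs_calG_div_le hσ hb) hr).congr_of_eventuallyEq heq.symm

theorem hasDerivAt_calG_div_sq (hr : 0 < r) :
    HasDerivAt (fun ρ => calG φ ρ / ρ ^ 2) (φ r / r - 2 * (calG φ r / r ^ 2) / r) r := by
  refine ((hasDerivAt_calG hσ hφ hb hr).div (hasDerivAt_pow 2 r) (by positivity)).congr_deriv ?_
  field_simp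
  ring

omit hφ in
theorem abs_calG_div_sq_le (hr : 0 < r) : |calG φ r / r ^ 2| ≤ K / (σ + 1) * r ^ (σ - 1) := by
  rw [sq, ← div_div, abs_div, abs_of_pos hr, div_le_iff₀ hr, Real.rpow_sub_one hr.ne',
    mul_div_assoc', div_mul_cancel₀ _ hr.ne']
  exact abs_calG_div_le hσ hb r hr

omit hφ in
theorem abs_calG_div_sq_add_abs_mul_le (hr : 0 < r) :
    |calG φ r / r ^ 2| + |φ r / r - 2 * (calG φ r / r ^ 2) / r| * r
      ≤ (1 + 3 / (σ + 1)) * K * r ^ (σ - 1) := by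
  have hG := abs_calG_div_sq_le hσ hb hr
  have hφr : |φ r| ≤ K * r ^ (σ - 1) := hb r hr
  calc |calG φ r / r ^ 2| + |φ r / r - 2 * (calG φ r / r ^ 2) / r| * r
      = |calG φ r / r ^ 2| + |φ r - 2 * (calG φ r / r ^ 2)| := by
        rw [← sub_div, abs_div (_ - _), abs_of_pos hr, div_mul_cancel₀ _ hr.ne']
    _ ≤ 3 * |calG φ r / r ^ 2| + |φ r| := by
        have h := abs_sub (φ r) (2 * (calG φ r / r ^ 2))
        rw [abs_mul, abs_two] at h
        linarith
    _ ≤ 3 * (K / (σ + 1) * r ^ (σ - 1)) + K * r ^ (σ - 1) := by gcongr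
    _ = (1 + 3 / (σ + 1)) * K * r ^ (σ - 1) := by ring

end CalJ

/-- For `σ ∈ (1/2,1)`, `K ≥ 0` and continuous `φ : (0,∞) → ℝ` with
`|φ(τ)| ≤ K τ^{σ−1}`, the function `u(x) = 𝒥[φ](|x|)` satisfies
`|u(x)| ≤ K|x|^{σ+1}/(σ+1)²`, `|∇u(x)| ≤ K|x|^σ/(σ+1)` and
`|∂²_{ij}u(x)| ≤ C K |x|^{σ−1}`, with `C = C(σ)`. -/
theorem statement_5 (σ : ℝ) (hσ : σ ∈ Set.Ioo (1 / 2 : ℝ) 1) :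
    ∃ C > (0 : ℝ), ∀ K : ℝ, 0 ≤ K → ∀ φ : ℝ → ℝ, ContinuousOn φ (Set.Ioi 0) →
      (∀ τ : ℝ, 0 < τ → |φ τ| ≤ K * τ ^ (σ - 1)) →
      ∀ x : E2, x ≠ 0 →
        |calJ φ ‖x‖| ≤ K * ‖x‖ ^ (σ + 1) / (σ + 1) ^ 2 ∧
        ‖gradient (fun z : E2 => calJ φ ‖z‖) x‖ ≤ K * ‖x‖ ^ σ / (σ + 1) ∧
        ∀ i j : Fin 2,
          |pd i (pd j (fun z : E2 => calJ φ ‖z‖)) x| ≤ C * K * ‖x‖ ^ (σ - 1) := by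
  have hσ' : -1 < σ := by linarith [hσ.1]
  have hC : 0 < 1 + 3 / (σ + 1) := by
    have : 0 < σ + 1 := by linarith
    positivity
  refine ⟨1 + 3 / (σ + 1), hC, ?_⟩
  intro K _ φ hφ hb x hx
  have hr : 0 < ‖x‖ := norm_pos_iff.2 hx
  have hJ : ∀ r > 0, HasDerivAt (calJ φ) (r * (calG φ r / r ^ 2)) r := fun r hr => by
    convert hasDerivAt_calJ hσ' hφ hb hr using 1
    field_simp
  refine ⟨abs_calJ_le hσ' hb (norm_nonneg x), ?_, fun i j => ?_⟩
  · rw [norm_gradient_comp_norm hx (hasDerivAt_calJ hσ' hφ hb hr)]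
    exact (abs_calG_div_le hσ' hb _ hr).trans_eq (by ring)
  · calc |pd i (pd j (fun z : E2 => calJ φ ‖z‖)) x|
        ≤ (|calG φ ‖x‖ / ‖x‖ ^ 2| + |φ ‖x‖ / ‖x‖ - 2 * (calG φ ‖x‖ / ‖x‖ ^ 2) / ‖x‖| * ‖x‖)
          * (‖EuclideanSpace.single i (1 : ℝ)‖ * ‖EuclideanSpace.single j (1 : ℝ)‖) :=
        abs_fderiv_fderiv_comp_norm_apply_le hJ hx (hasDerivAt_calG_div_sq hσ' hφ hb hr) _ _
      _ ≤ (1 + 3 / (σ + 1)) * K * ‖x‖ ^ (σ - 1) := by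
        rw [PiLp.norm_single, PiLp.norm_single, norm_one, mul_one, mul_one]
        exact abs_calG_div_sq_add_abs_mul_le hσ' hb hr
end
end

section
/- Let p ∈ (2, ∞). There is a constant C = C(p) such that for all s ∈ ℝ, y ∈ ℝ² and α ∈ ℝ²: |k^Lin_s(y) − k^Lin_s(y−α) − α·∇k^Lin_s(y)| ≤ C·|s|·|α|^{2−2/p}. -/
/-!
Write `⟨y⟩ = √(|y|² + 1)`. The gradient of `k^Lin_s` is `s y / (⟨y⟩ + 1)`; it is bounded by `|s|`
and `2|s|`-Lipschitz. The mean value inequality therefore bounds the first-order Taylor remainder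
both by `2|s||α|` and by `2|s||α|²`, and `min(t, t²) ≤ t^θ` for every `θ ∈ [1, 2]`, in particular for
`θ = 2 - 2/p`.
-/

open MeasureTheory
open scoped RealInnerProductSpace

noncomputable section

/-- The solution `k^Lin_s` of the linearized self-similar Muskat profile equation. -/
def kLin (s : ℝ) (y : E2) : ℝ :=
  s * (Real.sqrt (‖y‖ ^ 2 + 1) - Real.log (Real.sqrt (‖y‖ ^ 2 + 1) + 1))

namespace Real

/-- Squaring, this is `a b + 1 ≤ √(a² + 1) √(b² + 1)`: Cauchy–Schwarz for `(a, 1)` and `(b, 1)`. -/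
lemma abs_sqrt_sq_add_one_sub_le (a b : ℝ) :
    |√(a ^ 2 + 1) - √(b ^ 2 + 1)| ≤ |a - b| := by
  have hA : √(a ^ 2 + 1) ^ 2 = a ^ 2 + 1 := sq_sqrt (by positivity)
  have hB : √(b ^ 2 + 1) ^ 2 = b ^ 2 + 1 := sq_sqrt (by positivity)
  have haA : |a| ≤ √(a ^ 2 + 1) := abs_le_sqrt (by linarith)
  have hbB : |b| ≤ √(b ^ 2 + 1) := abs_le_sqrt (by linarith)
  rw [← sq_le_sq₀ (abs_nonneg _) (abs_nonneg _), sq_abs, sq_abs]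
  nlinarith [mul_le_mul haA hbB (abs_nonneg b) (sqrt_nonneg _), abs_mul a b, le_abs_self (a * b)]

lemma min_le_rpow {t θ : ℝ} (ht : 0 ≤ t) (hθ₁ : 1 ≤ θ) (hθ₂ : θ ≤ 2) :
    min t (t ^ 2) ≤ t ^ θ := by
  rcases le_total t 1 with ht1 | ht1
  · calc min t (t ^ 2) ≤ t ^ (2 : ℝ) := by rw [rpow_two]; exact min_le_right _ _
      _ ≤ t ^ θ := rpow_le_rpow_of_exponent_ge' ht ht1 (by linarith) hθ₂
  · calc min t (t ^ 2) ≤ t ^ (1 : ℝ) := by rw [rpow_one]; exact min_le_left _ _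
      _ ≤ t ^ θ := rpow_le_rpow_of_exponent_le ht1 hθ₁

lemma hasDerivAt_sqrt_add_one_sub_log {t : ℝ} (ht : -1 < t) :
    HasDerivAt (fun t => √(t + 1) - log (√(t + 1) + 1)) (2 * (√(t + 1) + 1))⁻¹ t := by
  have hpos : 0 < √(t + 1) := sqrt_pos.2 (by linarith)
  have hsqrt : HasDerivAt (fun t => √(t + 1)) (1 / (2 * √(t + 1))) t :=
    ((hasDerivAt_id' t).add_const 1).sqrt (by linarith)
  refine (hsqrt.sub ((hsqrt.add_const 1).log (by positivity))).congr_deriv ?_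
  field_simp
  ring

end Real

section KLinGrad

variable {E : Type*} [NormedAddCommGroup E] [NormedSpace ℝ E]

def kLinGrad (y : E) : E := (√(‖y‖ ^ 2 + 1) + 1)⁻¹ • y

lemma norm_kLinGrad_le_one (y : E) : ‖kLinGrad y‖ ≤ 1 := by
  have hy : ‖y‖ ≤ √(‖y‖ ^ 2 + 1) := Real.le_sqrt_of_sq_le (by linarith)
  have hpos : 0 < √(‖y‖ ^ 2 + 1) + 1 := by positivity
  rw [kLinGrad, norm_smul, norm_inv, Real.norm_of_nonneg hpos.le, inv_mul_le_iff₀ hpos]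
  linarith

lemma lipschitzWith_kLinGrad : LipschitzWith 2 (kLinGrad (E := E)) := by
  refine LipschitzWith.of_dist_le_mul fun z y => ?_
  rw [dist_eq_norm, dist_eq_norm, NNReal.coe_ofNat]
  set u := √(‖z‖ ^ 2 + 1)
  set v := √(‖y‖ ^ 2 + 1)
  have hu : 0 ≤ u := Real.sqrt_nonneg _
  have hv : ‖y‖ ≤ v := Real.le_sqrt_of_sq_le (by linarith)
  have huv : |u - v| ≤ ‖z - y‖ :=
    (Real.abs_sqrt_sq_add_one_sub_le _ _).trans (abs_norm_sub_norm_le z y)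
  have hsplit : kLinGrad z - kLinGrad y = (u + 1)⁻¹ • (z - y) + ((u + 1)⁻¹ - (v + 1)⁻¹) • y := by
    simp only [kLinGrad, smul_sub, sub_smul]
    abel
  have hcoef : |(u + 1)⁻¹ - (v + 1)⁻¹| * ‖y‖ ≤ ‖z - y‖ := by
    rw [inv_sub_inv (by positivity) (by positivity), abs_div,
      abs_of_pos (by positivity : 0 < (u + 1) * (v + 1)), div_mul_eq_mul_div,
      div_le_iff₀ (by positivity), add_sub_add_right_eq_sub, abs_sub_comm]
    have hyuv : ‖y‖ ≤ (u + 1) * (v + 1) := by nlinarith [mul_nonneg hu (norm_nonneg y)]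
    exact mul_le_mul huv hyuv (norm_nonneg _) (norm_nonneg _)
  calc ‖kLinGrad z - kLinGrad y‖
      ≤ (u + 1)⁻¹ * ‖z - y‖ + |(u + 1)⁻¹ - (v + 1)⁻¹| * ‖y‖ := by
        rw [hsplit]
        refine (norm_add_le _ _).trans_eq ?_
        rw [norm_smul, norm_smul, Real.norm_of_nonneg (by positivity), Real.norm_eq_abs]
    _ ≤ 1 * ‖z - y‖ + ‖z - y‖ := by
        gcongr
        exact inv_le_one_of_one_le₀ (by linarith)
    _ = 2 * ‖z - y‖ := by ring

end KLinGrad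

lemma hasGradientAt_kLin (s : ℝ) (y : E2) : HasGradientAt (kLin s) (s • kLinGrad y) y := by
  have hφ := Real.hasDerivAt_sqrt_add_one_sub_log (neg_one_lt_zero.trans_le (sq_nonneg ‖y‖))
  have hk := (hφ.comp_hasFDerivAt y (hasStrictFDerivAt_norm_sq y).hasFDerivAt).const_mul s
  refine HasFDerivAt.congr_fderiv (f := kLin s) hk ?_
  ext z
  simp only [kLinGrad, InnerProductSpace.toDual_apply_apply, real_inner_smul_left,
    FunLike.coe_smul, Pi.smul_apply, innerSL_apply_apply, smul_eq_mul, mul_inv]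
  ring

section TaylorRemainder

open InnerProductSpace Metric

variable {F : Type*} [NormedAddCommGroup F] [InnerProductSpace ℝ F] [CompleteSpace F]
  {f : F → ℝ} {f' : F → F}

lemma abs_sub_sub_inner_le_of_norm_le (hf : ∀ z, HasGradientAt f (f' z) z) {M : ℝ}
    (hM : ∀ z, ‖f' z‖ ≤ M) (y α : F) :
    |f y - f (y - α) - ⟪α, f' y⟫| ≤ 2 * M * ‖α‖ := by
  have hdiff : |f y - f (y - α)| ≤ M * ‖α‖ := by
    simpa using convex_univ.norm_image_sub_le_of_norm_hasFDerivWithin_le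
      (fun z _ => (hf z).hasFDerivAt.hasFDerivWithinAt)
      (fun z _ => (LinearIsometryEquiv.norm_map _ _).trans_le (hM z))
      (Set.mem_univ (y - α)) (Set.mem_univ y)
  have hinner : |⟪α, f' y⟫| ≤ M * ‖α‖ :=
    (abs_real_inner_le_norm _ _).trans (by rw [mul_comm]; gcongr; exact hM y)
  calc |f y - f (y - α) - ⟪α, f' y⟫| ≤ |f y - f (y - α)| + |⟪α, f' y⟫| := abs_sub _ _
    _ ≤ 2 * M * ‖α‖ := by linarith

lemma abs_sub_sub_inner_le_of_lipschitzWith (hf : ∀ z, HasGradientAt f (f' z) z) {K : NNReal}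
    (hK : LipschitzWith K f') (y α : F) :
    |f y - f (y - α) - ⟪α, f' y⟫| ≤ K * ‖α‖ ^ 2 := by
  have hbound : ∀ z ∈ closedBall y ‖α‖, ‖toDual ℝ F (f' z) - toDual ℝ F (f' y)‖ ≤ K * ‖α‖ := by
    intro z hz
    rw [← map_sub, LinearIsometryEquiv.norm_map]
    exact (hK.norm_sub_le z y).trans (by gcongr; exact mem_closedBall_iff_norm.1 hz)
  have hmem : y - α ∈ closedBall y ‖α‖ := by simp
  have := (convex_closedBall y ‖α‖).norm_image_sub_le_of_norm_hasFDerivWithin_le'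
    (fun z _ => (hf z).hasFDerivAt.hasFDerivWithinAt) hbound (mem_closedBall_self (norm_nonneg α))
    hmem
  rw [← abs_neg, show -(f y - f (y - α) - ⟪α, f' y⟫) = f (y - α) - f y + ⟪α, f' y⟫ by ring]
  simpa [toDual_apply_apply, real_inner_comm, sq, mul_assoc] using this

end TaylorRemainder

/-- For `p ∈ (2,∞)` there is `C = C(p)` with
`|k^Lin_s(y) − k^Lin_s(y−α) − α·∇k^Lin_s(y)| ≤ C |s| |α|^{2−2/p}` for all `s, y, α`. -/
theorem statement_10 (p : ℝ) (hp : p ∈ Set.Ioi (2 : ℝ)) :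
    ∃ C > (0 : ℝ), ∀ (s : ℝ) (y α : E2),
      |kLin s y - kLin s (y - α) - ⟪α, gradient (kLin s) y⟫| ≤
        C * |s| * ‖α‖ ^ (2 - 2 / p) := by
  have hp2 : 2 < p := hp
  have hθ₁ : 1 ≤ 2 - 2 / p := by
    have : 2 / p ≤ 1 := (div_le_one (by linarith)).2 hp2.le
    linarith
  have hθ₂ : 2 - 2 / p ≤ 2 := by
    have : 0 ≤ 2 / p := by positivity
    linarith
  refine ⟨2, two_pos, fun s y α => ?_⟩
  have hgrad : ∀ z, HasGradientAt (kLin s) ((s • kLinGrad) z) z := hasGradientAt_kLin s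
  have hbound (z : E2) : ‖(s • kLinGrad) z‖ ≤ |s| := by
    simpa [norm_smul] using mul_le_of_le_one_right (abs_nonneg s) (norm_kLinGrad_le_one z)
  have hlip : LipschitzWith (2 * ‖s‖₊) (s • kLinGrad (E := E2)) :=
    holderWith_one.1 (lipschitzWith_kLinGrad.holderWith.smul s)
  have hfirst := abs_sub_sub_inner_le_of_norm_le hgrad hbound y α
  have hsecond := abs_sub_sub_inner_le_of_lipschitzWith hgrad hlip y α
  push_cast at hsecond
  rw [(hgrad y).gradient]
  calc _ ≤ 2 * |s| * min ‖α‖ (‖α‖ ^ 2) := by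
        rw [mul_min_of_nonneg _ _ (by positivity)]
        exact le_min hfirst hsecond
    _ ≤ 2 * |s| * ‖α‖ ^ (2 - 2 / p) := by
        gcongr
        exact Real.min_le_rpow (norm_nonneg α) hθ₁ hθ₂
end
end

section
/- There is an absolute constant C such that for all s ∈ ℝ, y ∈ ℝ² and α ∈ ℝ² with α ≠ 0: |(Δ_α k^Lin_s(y))² − (Δ_{−α} k^Lin_s(y))²| ≤ C·s²·( 1_{|α| ≤ |y|/2} · ( |y||α|/(|y|²+|α|²+1) + |y|/(|α|·√(|y|²+|α|²+1)) ) + 1_{|α| ≥ |y|/2} · |y|/√(|y|²+|α|²+1) ). -/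
open MeasureTheory

noncomputable section

/-- The finite difference quotient `Δ_α f(y) = (f(y) − f(y−α))/|α|`. -/
def dquot (f : E2 → ℝ) (α y : E2) : ℝ := (f y - f (y - α)) / ‖α‖

/-!
Write `k^Lin_s(y) = s F(⟨|y|⟩)` with `F u = u - log (u + 1)` (`kProfile`) and
`⟨r⟩ = √(r² + 1)`, and put `uᵢ = ⟨rᵢ⟩` for `r₀ = |y|`, `r₁ = |y - α|`, `r₂ = |y + α|`, and
`t = |α|`, `σ = √(r₀² + t² + 1)`. The difference of squares factors as
`(s/t)² (2 F u₀ - F u₁ - F u₂) (F u₂ - F u₁)`.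
By the parallelogram law `σ` is the quadratic mean of `u₁, u₂` and `|u₂² - u₁²| ≤ 4 r₀ t`;
as `F` is 1-Lipschitz on `[0, ∞)` this gives `|F u₂ - F u₁| ≤ 4 r₀ t / σ`. Splitting the second
difference at the midpoint of `u₁, u₂` leaves a first-order term, controlled by `|u₀ - σ|` and
the gap between the arithmetic and quadratic means, and the Jensen gap of `log`; both are
`O(t² / σ)`. Hence the left-hand side is at most `56 s² r₀ t / σ²`, which is dominated by the
right-hand side in both regimes since `t ≤ σ`.
-/

open Real

def kProfile (u : ℝ) : ℝ := u - log (u + 1)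

lemma log_add_one_sub_log_add_one_mem_Icc {u v : ℝ} (hv : 0 ≤ v) (hvu : v ≤ u) :
    log (u + 1) - log (v + 1) ∈ Set.Icc 0 (u - v) := by
  have hv1 : 0 < v + 1 := by linarith
  refine ⟨sub_nonneg.2 (log_le_log hv1 (by linarith)), ?_⟩
  calc log (u + 1) - log (v + 1) = log ((u + 1) / (v + 1)) :=
        (log_div (by linarith) hv1.ne').symm
    _ ≤ (u + 1) / (v + 1) - 1 := log_le_sub_one_of_pos (div_pos (by linarith) hv1)
    _ = (u - v) / (v + 1) := by field_simp; ring
    _ ≤ u - v := div_le_self (by linarith) (by linarith)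

lemma abs_kProfile_sub_le {u v : ℝ} (hu : 0 ≤ u) (hv : 0 ≤ v) :
    |kProfile u - kProfile v| ≤ |u - v| := by
  wlog hvu : v ≤ u generalizing u v
  · rw [abs_sub_comm, abs_sub_comm u]
    exact this hv hu (le_of_not_ge hvu)
  obtain ⟨h0, h1⟩ := log_add_one_sub_log_add_one_mem_Icc hv hvu
  rw [abs_of_nonneg (sub_nonneg.2 hvu), abs_le]
  unfold kProfile
  constructor <;> linarith

lemma two_mul_log_midpoint_sub_log_sub_log_mem_Icc {a b : ℝ} (ha : 0 < a) (hb : 0 < b) :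
    2 * log ((a + b) / 2) - log a - log b ∈ Set.Icc 0 ((a - b) ^ 2 / (4 * (a * b))) := by
  have hab : 0 < a * b := mul_pos ha hb
  have hlog : 2 * log ((a + b) / 2) - log a - log b = log (((a + b) / 2) ^ 2 / (a * b)) := by
    rw [log_div (by positivity) hab.ne', log_pow, log_mul ha.ne' hb.ne']
    push_cast; ring
  have hratio : ((a + b) / 2) ^ 2 / (a * b) - 1 = (a - b) ^ 2 / (4 * (a * b)) := by
    field_simp; ring
  rw [hlog]
  refine ⟨log_nonneg ?_, hratio ▸ log_le_sub_one_of_pos (by positivity)⟩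
  rw [le_div_iff₀ hab]
  nlinarith [sq_nonneg (a - b)]

lemma abs_two_mul_kProfile_sub_sub_le {u₀ u₁ u₂ : ℝ} (h₀ : 0 ≤ u₀) (h₁ : 0 ≤ u₁) (h₂ : 0 ≤ u₂) :
    |2 * kProfile u₀ - kProfile u₁ - kProfile u₂| ≤
      |2 * u₀ - u₁ - u₂| + (u₁ - u₂) ^ 2 / (4 * ((u₁ + 1) * (u₂ + 1))) := by
  set m := (u₁ + u₂) / 2
  have hmid : |kProfile u₀ - kProfile m| ≤ |u₀ - m| := abs_kProfile_sub_le h₀ (by positivity)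
  have hm : 2 * |u₀ - m| = |2 * u₀ - u₁ - u₂| := by
    rw [← abs_two, ← abs_mul]; congr 1; ring
  obtain ⟨hJ₀, hJ₁⟩ := two_mul_log_midpoint_sub_log_sub_log_mem_Icc (a := u₁ + 1) (b := u₂ + 1)
    (by linarith) (by linarith)
  rw [show (u₁ + 1 + (u₂ + 1)) / 2 = m + 1 by ring] at hJ₀ hJ₁
  rw [show u₁ + 1 - (u₂ + 1) = u₁ - u₂ by ring] at hJ₁
  have hsplit : 2 * kProfile u₀ - kProfile u₁ - kProfile u₂ =
      2 * (kProfile u₀ - kProfile m) - (2 * log (m + 1) - log (u₁ + 1) - log (u₂ + 1)) := by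
    simp only [kProfile]; ring
  rw [hsplit]
  refine (abs_sub _ _).trans ?_
  rw [abs_mul, abs_two, abs_of_nonneg hJ₀]
  linarith

lemma abs_sub_le_abs_sq_sub_sq_div {u₁ u₂ σ : ℝ} (hσ : 0 < σ) (hσu : σ ≤ u₁ + u₂) :
    |u₂ - u₁| ≤ |u₂ ^ 2 - u₁ ^ 2| / σ := by
  rw [le_div_iff₀ hσ, show u₂ ^ 2 - u₁ ^ 2 = (u₂ - u₁) * (u₂ + u₁) by ring, abs_mul,
    abs_of_nonneg (by linarith : 0 ≤ u₂ + u₁)]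
  exact mul_le_mul_of_nonneg_left (by linarith) (abs_nonneg _)

lemma abs_two_mul_sub_sub_le_of_quadMean {u₁ u₂ σ : ℝ} (h₁ : 0 ≤ u₁) (h₂ : 0 ≤ u₂) (hσ : 0 < σ)
    (hmean : u₁ ^ 2 + u₂ ^ 2 = 2 * σ ^ 2) (u₀ : ℝ) :
    |2 * u₀ - u₁ - u₂| ≤ 2 * |u₀ - σ| + (u₁ - u₂) ^ 2 / (2 * σ) := by
  have hgap : (2 * σ - u₁ - u₂) * (2 * σ + u₁ + u₂) = (u₁ - u₂) ^ 2 := by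
    linear_combination (-2) * hmean
  have hgap₀ : 0 ≤ 2 * σ - u₁ - u₂ := by nlinarith [sq_nonneg (u₁ - u₂)]
  have hgap₁ : 2 * σ - u₁ - u₂ ≤ (u₁ - u₂) ^ 2 / (2 * σ) := by
    rw [le_div_iff₀ (by positivity), ← hgap]
    exact mul_le_mul_of_nonneg_left (by linarith) hgap₀
  calc |2 * u₀ - u₁ - u₂| = |2 * (u₀ - σ) + (2 * σ - u₁ - u₂)| := by ring_nf
    _ ≤ 2 * |u₀ - σ| + (2 * σ - u₁ - u₂) := by
      refine (abs_add_le _ _).trans ?_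
      rw [abs_mul, abs_two, abs_of_nonneg hgap₀]
    _ ≤ _ := by linarith

def kRadial (r : ℝ) : ℝ := kProfile √(r ^ 2 + 1)

lemma kLin_eq (s : ℝ) (y : E2) : kLin s y = s * kRadial ‖y‖ := rfl

lemma abs_sq_sub_sq_kRadial_sub_le {r₀ r₁ r₂ t : ℝ} (hr₀ : 0 ≤ r₀) (ht : 0 ≤ t)
    (hmean : r₁ ^ 2 + r₂ ^ 2 = 2 * r₀ ^ 2 + 2 * t ^ 2)
    (hdiff : |r₂ ^ 2 - r₁ ^ 2| ≤ 4 * (r₀ * t)) :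
    |(kRadial r₀ - kRadial r₁) ^ 2 - (kRadial r₀ - kRadial r₂) ^ 2| ≤
      56 * r₀ * t ^ 3 / (r₀ ^ 2 + t ^ 2 + 1) := by
  unfold kRadial
  set u₀ := √(r₀ ^ 2 + 1)
  set u₁ := √(r₁ ^ 2 + 1)
  set u₂ := √(r₂ ^ 2 + 1)
  set σ := √(r₀ ^ 2 + t ^ 2 + 1)
  have hu₀ : u₀ ^ 2 = r₀ ^ 2 + 1 := sq_sqrt (by positivity)
  have hu₁ : u₁ ^ 2 = r₁ ^ 2 + 1 := sq_sqrt (by positivity)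
  have hu₂ : u₂ ^ 2 = r₂ ^ 2 + 1 := sq_sqrt (by positivity)
  have hσsq : σ ^ 2 = r₀ ^ 2 + t ^ 2 + 1 := sq_sqrt (by positivity)
  have hσ : 0 < σ := sqrt_pos.2 (by positivity)
  have hr₀σ : r₀ ≤ σ := (le_sqrt hr₀ (by positivity)).2 (by nlinarith)
  have htσ : t ≤ σ := (le_sqrt ht (by positivity)).2 (by nlinarith)
  have hσu : σ ≤ u₁ + u₂ := by nlinarith [sqrt_nonneg (r₁ ^ 2 + 1), sqrt_nonneg (r₂ ^ 2 + 1)]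
  have hdiffu : |u₂ - u₁| ≤ 4 * (r₀ * t) / σ :=
    (abs_sub_le_abs_sq_sub_sq_div hσ hσu).trans
      (div_le_div_of_nonneg_right (by rwa [hu₁, hu₂, add_sub_add_right_eq_sub]) hσ.le)
  have hdiffu_sq : (u₁ - u₂) ^ 2 ≤ 16 * t ^ 2 := by
    have : |u₂ - u₁| ≤ 4 * t := hdiffu.trans <| by
      rw [div_le_iff₀ hσ]; nlinarith
    nlinarith [abs_nonneg (u₂ - u₁), sq_abs (u₂ - u₁)]
  have hu₀σ : |u₀ - σ| ≤ t ^ 2 / σ := by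
    rw [abs_sub_comm]
    refine (abs_sub_le_abs_sq_sub_sq_div hσ (le_add_of_nonneg_left (sqrt_nonneg _))).trans ?_
    rw [hu₀, hσsq, show r₀ ^ 2 + t ^ 2 + 1 - (r₀ ^ 2 + 1) = t ^ 2 by ring, abs_sq]
  have hsecond : |2 * u₀ - u₁ - u₂| ≤ 10 * (t ^ 2 / σ) := by
    refine (abs_two_mul_sub_sub_le_of_quadMean (sqrt_nonneg _) (sqrt_nonneg _) hσ
      (by rw [hu₁, hu₂, hσsq]; linarith) u₀).trans ?_
    have : (u₁ - u₂) ^ 2 / (2 * σ) ≤ 8 * (t ^ 2 / σ) :=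
      calc (u₁ - u₂) ^ 2 / (2 * σ) ≤ 16 * t ^ 2 / (2 * σ) := by gcongr
        _ = 8 * (t ^ 2 / σ) := by ring
    linarith
  have hjensen : (u₁ - u₂) ^ 2 / (4 * ((u₁ + 1) * (u₂ + 1))) ≤ 4 * (t ^ 2 / σ) :=
    calc (u₁ - u₂) ^ 2 / (4 * ((u₁ + 1) * (u₂ + 1))) ≤ 16 * t ^ 2 / (4 * σ) := by
          gcongr
          nlinarith [mul_nonneg (sqrt_nonneg (r₁ ^ 2 + 1)) (sqrt_nonneg (r₂ ^ 2 + 1))]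
      _ = 4 * (t ^ 2 / σ) := by ring
  have hsum : |2 * kProfile u₀ - kProfile u₁ - kProfile u₂| ≤ 14 * (t ^ 2 / σ) := by
    have := abs_two_mul_kProfile_sub_sub_le (u₀ := u₀) (u₁ := u₁) (u₂ := u₂)
      (sqrt_nonneg _) (sqrt_nonneg _) (sqrt_nonneg _)
    linarith
  have hdiffk : |kProfile u₂ - kProfile u₁| ≤ 4 * (r₀ * t) / σ :=
    (abs_kProfile_sub_le (sqrt_nonneg _) (sqrt_nonneg _)).trans hdiffu
  calc _ = |2 * kProfile u₀ - kProfile u₁ - kProfile u₂| * |kProfile u₂ - kProfile u₁| := by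
        rw [← abs_mul]; ring_nf
    _ ≤ 14 * (t ^ 2 / σ) * (4 * (r₀ * t) / σ) :=
        mul_le_mul hsum hdiffk (abs_nonneg _) (by positivity)
    _ = _ := by rw [← hσsq]; field_simp; ring

lemma abs_norm_add_sq_sub_norm_sub_sq_le {V : Type*} [NormedAddCommGroup V]
    [InnerProductSpace ℝ V] (y α : V) : |‖y + α‖ ^ 2 - ‖y - α‖ ^ 2| ≤ 4 * (‖y‖ * ‖α‖) := by
  rw [norm_add_sq_real, norm_sub_sq_real,
    show ∀ a b c : ℝ, a + 2 * b + c - (a - 2 * b + c) = 4 * b by intros; ring, abs_mul,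
    abs_of_pos four_pos]
  exact mul_le_mul_of_nonneg_left (abs_real_inner_le_norm y α) zero_le_four

lemma abs_dquot_kLin_sq_sub_le (s : ℝ) (y : E2) {α : E2} (hα : α ≠ 0) :
    |dquot (kLin s) α y ^ 2 - dquot (kLin s) (-α) y ^ 2| ≤
      56 * s ^ 2 * (‖y‖ * ‖α‖ / (‖y‖ ^ 2 + ‖α‖ ^ 2 + 1)) := by
  have ht : 0 < ‖α‖ := norm_pos_iff.2 hα
  have hmean : ‖y - α‖ ^ 2 + ‖y + α‖ ^ 2 = 2 * ‖y‖ ^ 2 + 2 * ‖α‖ ^ 2 := by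
    linarith [norm_add_sq_real y α, norm_sub_sq_real y α]
  have hkey := abs_sq_sub_sq_kRadial_sub_le (norm_nonneg y) ht.le hmean
    (abs_norm_add_sq_sub_norm_sub_sq_le y α)
  have hsq : dquot (kLin s) α y ^ 2 - dquot (kLin s) (-α) y ^ 2 =
      (s / ‖α‖) ^ 2 *
        ((kRadial ‖y‖ - kRadial ‖y - α‖) ^ 2 - (kRadial ‖y‖ - kRadial ‖y + α‖) ^ 2) := by
    simp only [dquot, kLin_eq, norm_neg, sub_neg_eq_add]
    ring
  rw [hsq, abs_mul, abs_of_nonneg (sq_nonneg _)]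
  calc _ ≤ (s / ‖α‖) ^ 2 * (56 * ‖y‖ * ‖α‖ ^ 3 / (‖y‖ ^ 2 + ‖α‖ ^ 2 + 1)) := by gcongr
    _ = _ := by field_simp

/-- Pointwise bound for
`|(Δ_α k^Lin_s(y))² − (Δ_{−α} k^Lin_s(y))²|`. -/
theorem statement_11 :
    ∃ C > (0 : ℝ), ∀ (s : ℝ) (y α : E2), α ≠ 0 →
      |dquot (kLin s) α y ^ 2 - dquot (kLin s) (-α) y ^ 2| ≤
        C * s ^ 2 *
          ((if ‖α‖ ≤ ‖y‖ / 2 then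
              ‖y‖ * ‖α‖ / (‖y‖ ^ 2 + ‖α‖ ^ 2 + 1)
                + ‖y‖ / (‖α‖ * Real.sqrt (‖y‖ ^ 2 + ‖α‖ ^ 2 + 1))
            else 0)
          + (if ‖y‖ / 2 ≤ ‖α‖ then ‖y‖ / Real.sqrt (‖y‖ ^ 2 + ‖α‖ ^ 2 + 1) else 0)) := by
  refine ⟨56, by norm_num, fun s y α hα => (abs_dquot_kLin_sq_sub_le s y hα).trans ?_⟩
  gcongr
  set σ := √(‖y‖ ^ 2 + ‖α‖ ^ 2 + 1)
  have hσsq : σ ^ 2 = ‖y‖ ^ 2 + ‖α‖ ^ 2 + 1 := sq_sqrt (by positivity)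
  have hσ : 0 < σ := sqrt_pos.2 (by positivity)
  split_ifs with hnear hfar hfar
  · have : 0 ≤ ‖y‖ / (‖α‖ * σ) + ‖y‖ / σ := by positivity
    linarith
  · have : 0 ≤ ‖y‖ / (‖α‖ * σ) := by positivity
    linarith
  · rw [zero_add, ← hσsq, div_le_div_iff₀ (by positivity) hσ]
    have htσ : ‖α‖ ≤ σ := (le_sqrt (norm_nonneg _) (by positivity)).2 (by nlinarith)
    nlinarith [norm_nonneg y, mul_nonneg (norm_nonneg y) (sub_nonneg.2 htσ)]
  · exact absurd (le_of_not_ge hnear) hfar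

end
end

section
/- There is an absolute constant C such that for all s ∈ ℝ, y ∈ ℝ² and α ∈ ℝ² with α ≠ 0: |(δ_α − δ_{−α}) k^Lin_s(y)| = |k^Lin_s(y+α) − k^Lin_s(y−α)| ≤ C·|s|·|y||α|/√(|y|²+|α|²+1). -/
open MeasureTheory

noncomputable section

/-!
Writing `k^Lin_s(y) = s φ(⟨y⟩)` with `φ(u) = u - log (u + 1)` and `⟨y⟩ = √(|y|² + 1)`, the
function `φ` is `1`-Lipschitz on `[0, ∞)`, so it suffices to bound `|⟨y + α⟩ - ⟨y - α⟩|`.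
Since `⟨y + α⟩² - ⟨y - α⟩² = 4 y · α` and, by the parallelogram law,
`⟨y + α⟩ + ⟨y - α⟩ ≥ √(|y|² + |α|² + 1)`, this difference is at most
`4 |y| |α| / √(|y|² + |α|² + 1)`.
-/

open Real

lemma monotoneOn_sub_log_add_one : MonotoneOn (fun u : ℝ => u - log (u + 1)) (Set.Ici 0) := by
  intro v (hv : 0 ≤ v) u _ hvu
  have hv1 : 0 < v + 1 := by linarith
  have hlog : log ((u + 1) / (v + 1)) ≤ (u + 1) / (v + 1) - 1 :=
    log_le_sub_one_of_pos (div_pos (by linarith) hv1)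
  have hquot : (u + 1) / (v + 1) - 1 ≤ u - v := by
    rw [div_sub_one hv1.ne', div_le_iff₀ hv1]
    nlinarith
  rw [log_div (by linarith) hv1.ne'] at hlog
  dsimp only
  linarith

lemma abs_sub_log_add_one_sub_le {u v : ℝ} (hu : 0 ≤ u) (hv : 0 ≤ v) :
    |(u - log (u + 1)) - (v - log (v + 1))| ≤ |u - v| := by
  wlog hvu : v ≤ u generalizing u v
  · rw [abs_sub_comm, abs_sub_comm u]
    exact this hv hu (le_of_not_ge hvu)
  have hmono : v - log (v + 1) ≤ u - log (u + 1) := monotoneOn_sub_log_add_one hv hu hvu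
  have hlog : log (v + 1) ≤ log (u + 1) := log_le_log (by linarith) (by linarith)
  rw [abs_of_nonneg (sub_nonneg.2 hmono), abs_of_nonneg (sub_nonneg.2 hvu)]
  linarith

lemma abs_kLin_sub_kLin_le (s : ℝ) (y z : E2) :
    |kLin s y - kLin s z| ≤ |s| * |√(‖y‖ ^ 2 + 1) - √(‖z‖ ^ 2 + 1)| := by
  rw [kLin, kLin, ← mul_sub, abs_mul]
  exact mul_le_mul_of_nonneg_left
    (abs_sub_log_add_one_sub_le (sqrt_nonneg _) (sqrt_nonneg _)) (abs_nonneg s)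

section InnerProductSpace

variable {F : Type*} [NormedAddCommGroup F] [InnerProductSpace ℝ F]

lemma sqrt_norm_sq_add_norm_sq_add_one_le (y α : F) :
    √(‖y‖ ^ 2 + ‖α‖ ^ 2 + 1) ≤ √(‖y + α‖ ^ 2 + 1) + √(‖y - α‖ ^ 2 + 1) := by
  have hpar := parallelogram_law_with_norm ℝ y α
  have ha := sq_sqrt (show 0 ≤ ‖y + α‖ ^ 2 + 1 by positivity)
  have hb := sq_sqrt (show 0 ≤ ‖y - α‖ ^ 2 + 1 by positivity)
  rw [sqrt_le_left (by positivity)]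
  nlinarith [mul_nonneg (sqrt_nonneg (‖y + α‖ ^ 2 + 1)) (sqrt_nonneg (‖y - α‖ ^ 2 + 1))]

lemma abs_sqrt_norm_add_sq_add_one_sub_le (y α : F) :
    |√(‖y + α‖ ^ 2 + 1) - √(‖y - α‖ ^ 2 + 1)| ≤
      4 * (‖y‖ * ‖α‖) / √(‖y‖ ^ 2 + ‖α‖ ^ 2 + 1) := by
  set a := √(‖y + α‖ ^ 2 + 1)
  set b := √(‖y - α‖ ^ 2 + 1)
  have hsq_sub : a ^ 2 - b ^ 2 = 4 * inner ℝ y α := by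
    rw [sq_sqrt (by positivity), sq_sqrt (by positivity), norm_add_sq_real, norm_sub_sq_real]
    ring
  have hprod : |a - b| * (a + b) ≤ 4 * (‖y‖ * ‖α‖) := by
    rw [← abs_of_nonneg (by positivity : 0 ≤ a + b), ← abs_mul, mul_comm, ← sq_sub_sq, hsq_sub,
      abs_mul, abs_of_pos four_pos]
    gcongr
    exact abs_real_inner_le_norm y α
  rw [le_div_iff₀ (sqrt_pos.2 (by positivity))]
  calc |a - b| * √(‖y‖ ^ 2 + ‖α‖ ^ 2 + 1) ≤ |a - b| * (a + b) := by
        gcongr; exact sqrt_norm_sq_add_norm_sq_add_one_le y α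
    _ ≤ 4 * (‖y‖ * ‖α‖) := hprod

end InnerProductSpace

/-- `|(δ_α − δ_{−α})k^Lin_s(y)| = |k^Lin_s(y+α) − k^Lin_s(y−α)|
≤ C |s| |y||α| / √(|y|²+|α|²+1)`. -/
theorem statement_12 :
    ∃ C > (0 : ℝ), ∀ (s : ℝ) (y α : E2), α ≠ 0 →
      |(kLin s y - kLin s (y - α)) - (kLin s y - kLin s (y + α))| ≤
        C * |s| * (‖y‖ * ‖α‖ / Real.sqrt (‖y‖ ^ 2 + ‖α‖ ^ 2 + 1)) := by
  refine ⟨4, four_pos, fun s y α _ => ?_⟩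
  calc |(kLin s y - kLin s (y - α)) - (kLin s y - kLin s (y + α))|
      = |kLin s (y + α) - kLin s (y - α)| := by ring_nf
    _ ≤ |s| * |√(‖y + α‖ ^ 2 + 1) - √(‖y - α‖ ^ 2 + 1)| := abs_kLin_sub_kLin_le s _ _
    _ ≤ |s| * (4 * (‖y‖ * ‖α‖) / √(‖y‖ ^ 2 + ‖α‖ ^ 2 + 1)) := by
        gcongr; exact abs_sqrt_norm_add_sq_add_one_sub_le y α
    _ = 4 * |s| * (‖y‖ * ‖α‖ / √(‖y‖ ^ 2 + ‖α‖ ^ 2 + 1)) := by ring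
end
end

section
/- Let t₁ ∈ [1, 2) and t ∈ (t₁, t₁+1]. There is a constant C = C(t₁, t) such that for every measurable f : (0, ∞) → ℝ with ∫₀^∞ |f(r)|² r^{1+2t₁} dr < ∞, the function 𝓛[f] is well defined for a.e. r > 0 and ∫₀^∞ |𝓛[f](r)|² r^{1+2t} dr ≤ C · ∫₀^∞ |f(r)|² r^{1+2t₁} dr. -/
open MeasureTheory
open scoped ENNReal

noncomputable section

/-- The linear operator `𝓛[f](r) = r⁻³ ∫₀^r σ² e^{σ−r} f(σ) dσ`. -/
def calL (f : ℝ → ℝ) (r : ℝ) : ℝ :=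
  (∫ σ in Set.Ioc (0 : ℝ) r, σ ^ 2 * Real.exp (σ - r) * f σ) / r ^ 3

/-!
Put `α = 3 - 2t₁` and `v = 1 + 2t₁`, so that `α + v = 4` and `α > -1`. Cauchy–Schwarz for the
measure `e^{σ-r} dσ` on `(0, r]`, with `σ² = σ^{α/2} σ^{v/2}`, gives
`|r³ 𝓛[f](r)|² ≤ (∫₀^r σ^α e^{σ-r} dσ) (∫₀^r e^{σ-r} σ^v |f(σ)|² dσ)`, and the first factor is
`O(r^α min(r, 1))`: near `σ = r` the exponential has mass `≤ min(r, 1)`, and away from it the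
factor `e^{-r/2}` absorbs the extra power of `r`. Thus `|𝓛[f](r)|² r^{1+2t}` is bounded by
`r^β min(r, 1) ∫₀^r e^{σ-r} σ^v |f(σ)|² dσ` with `β = 2t - 2t₁ - 2 ∈ (-2, 0]`. After exchanging
the order of integration it remains that `∫_σ^∞ r^β min(r, 1) e^{σ-r} dr` is bounded uniformly in
`σ > 0`: the factor `min(r, 1)` makes `r^β` integrable at `0`, and `β ≤ 0` keeps it bounded at `∞`.
-/

open Set Real

theorem lintegral_sq_le_mul_of_sq_le {X : Type*} [MeasurableSpace X] {μ : Measure X}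
    {w a b : X → ℝ≥0∞} (ha : AEMeasurable a μ) (hb : AEMeasurable b μ)
    (h : ∀ᵐ x ∂μ, w x ^ 2 ≤ a x * b x) :
    (∫⁻ x, w x ∂μ) ^ 2 ≤ (∫⁻ x, a x ∂μ) * ∫⁻ x, b x ∂μ := by
  have sq_rpow_half : ∀ c : ℝ≥0∞, (c ^ 2) ^ (1 / 2 : ℝ) = c := fun c => by
    rw [← ENNReal.rpow_natCast, ← ENNReal.rpow_mul]; norm_num
  have rpow_half_sq : ∀ c : ℝ≥0∞, (c ^ (1 / 2 : ℝ)) ^ 2 = c := fun c => by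
    rw [← ENNReal.rpow_natCast, ← ENNReal.rpow_mul]; norm_num
  have hw : ∀ᵐ x ∂μ, w x ≤ a x ^ (1 / 2 : ℝ) * b x ^ (1 / 2 : ℝ) := by
    filter_upwards [h] with x hx
    rw [← ENNReal.mul_rpow_of_nonneg _ _ (by norm_num), ← sq_rpow_half (w x)]
    exact ENNReal.rpow_le_rpow hx (by norm_num)
  calc (∫⁻ x, w x ∂μ) ^ 2
      ≤ ((∫⁻ x, a x ∂μ) ^ (1 / 2 : ℝ) * (∫⁻ x, b x ∂μ) ^ (1 / 2 : ℝ)) ^ 2 := by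
        gcongr
        exact (lintegral_mono_ae hw).trans
          (ENNReal.lintegral_mul_norm_pow_le ha hb (by norm_num) (by norm_num) (by norm_num))
    _ = (∫⁻ x, a x ∂μ) * ∫⁻ x, b x ∂μ := by rw [mul_pow, rpow_half_sq, rpow_half_sq]

theorem lintegral_Ioi_lintegral_Ioc_swap {F : ℝ → ℝ → ℝ≥0∞}
    (hF : Measurable (Function.uncurry F)) :
    ∫⁻ r in Ioi 0, ∫⁻ σ in Ioc 0 r, F r σ = ∫⁻ σ in Ioi 0, ∫⁻ r in Ici σ, F r σ := by
  set S : Set (ℝ × ℝ) := {p | 0 < p.2 ∧ p.2 ≤ p.1}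
  have hS : MeasurableSet S := (measurableSet_lt measurable_const measurable_snd).inter
    (measurableSet_le measurable_snd measurable_fst)
  calc ∫⁻ r in Ioi 0, ∫⁻ σ in Ioc 0 r, F r σ
      = ∫⁻ r, ∫⁻ σ, S.indicator (Function.uncurry F) (r, σ) := by
        refine (setLIntegral_eq_of_support_subset fun r hr => ?_).trans
          (lintegral_congr fun r => (lintegral_indicator measurableSet_Ioc _).symm)
        by_contra h
        exact hr (by simp [Ioc_eq_empty (mt mem_Ioi.2 h)])
    _ = ∫⁻ σ, ∫⁻ r, S.indicator (Function.uncurry F) (r, σ) :=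
        lintegral_lintegral_swap (hF.indicator hS).aemeasurable
    _ = ∫⁻ σ in Ioi 0, ∫⁻ r in Ici σ, F r σ := by
        rw [← lintegral_indicator measurableSet_Ioi]
        refine lintegral_congr fun σ => ?_
        by_cases hσ : 0 < σ
        · rw [indicator_of_mem (mem_Ioi.2 hσ), ← lintegral_indicator measurableSet_Ici]
          congr 1 with r
          simp [S, indicator, hσ]
        · simp [S, indicator, hσ]

theorem lintegral_Ioi_mul_lintegral_Ioc_le {g W : ℝ → ℝ≥0∞} {k : ℝ → ℝ → ℝ≥0∞}
    (hg : Measurable g) (hk : Measurable (Function.uncurry k)) (hW : Measurable W) {c : ℝ≥0∞}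
    (hc : ∀ σ > 0, ∫⁻ r in Ioi σ, g r * k r σ ≤ c) :
    ∫⁻ r in Ioi 0, g r * ∫⁻ σ in Ioc 0 r, k r σ * W σ ≤ c * ∫⁻ σ in Ioi 0, W σ := by
  calc ∫⁻ r in Ioi 0, g r * ∫⁻ σ in Ioc 0 r, k r σ * W σ
      = ∫⁻ r in Ioi 0, ∫⁻ σ in Ioc 0 r, g r * k r σ * W σ := by
        refine lintegral_congr fun r => ?_
        simp_rw [mul_assoc]
        exact (lintegral_const_mul _ (hk.of_uncurry_left.mul hW)).symm
    _ = ∫⁻ σ in Ioi 0, (∫⁻ r in Ioi σ, g r * k r σ) * W σ := by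
        rw [lintegral_Ioi_lintegral_Ioc_swap (by fun_prop)]
        refine lintegral_congr fun σ => ?_
        rw [← restrict_Ioi_eq_restrict_Ici]
        exact lintegral_mul_const _ (hg.mul hk.of_uncurry_right)
    _ ≤ ∫⁻ σ in Ioi 0, c * W σ :=
        setLIntegral_mono' measurableSet_Ioi fun σ hσ => by gcongr; exact hc σ hσ
    _ = c * ∫⁻ σ in Ioi 0, W σ := lintegral_const_mul _ hW

theorem lintegral_Ioc_rpow {s γ : ℝ} (hs : 0 < s) (hγ : -1 < γ) :
    ∫⁻ x in Ioc 0 s, ENNReal.ofReal (x ^ γ) = ENNReal.ofReal (s ^ (γ + 1) / (γ + 1)) := by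
  have hint : IntegrableOn (fun x : ℝ => x ^ γ) (Ioc 0 s) :=
    (intervalIntegrable_iff_integrableOn_Ioc_of_le hs.le).1
      (intervalIntegral.intervalIntegrable_rpow' hγ)
  rw [← ofReal_integral_eq_lintegral_ofReal hint
    ((ae_restrict_mem measurableSet_Ioc).mono fun x hx => rpow_nonneg hx.1.le _),
    ← intervalIntegral.integral_of_le hs.le, integral_rpow (Or.inl hγ),
    zero_rpow (by linarith), sub_zero]

theorem lintegral_Ioi_exp_sub (σ : ℝ) :
    ∫⁻ r in Ioi σ, ENNReal.ofReal (exp (σ - r)) = 1 := by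
  have hexp : ∀ r, exp (σ - r) = exp σ * exp (-r) := fun r => by rw [← exp_add, sub_eq_add_neg]
  simp_rw [hexp]
  have hint : IntegrableOn (fun r : ℝ => exp σ * exp (-r)) (Ioi σ) :=
    IntegrableOn.congr_fun ((exp_neg_integrableOn_Ioi σ one_pos).const_mul (exp σ))
      (fun r _ => by simp) measurableSet_Ioi
  rw [← ofReal_integral_eq_lintegral_ofReal hint (ae_of_all _ fun r => by positivity),
    integral_const_mul, integral_exp_neg_Ioi, ← exp_add, add_neg_cancel, exp_zero,
    ENNReal.ofReal_one]

theorem lintegral_Ioc_exp_sub {a r : ℝ} (har : a ≤ r) :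
    ∫⁻ σ in Ioc a r, ENNReal.ofReal (exp (σ - r)) = ENNReal.ofReal (1 - exp (a - r)) := by
  have hint : IntegrableOn (fun σ : ℝ => exp (σ - r)) (Ioc a r) :=
    (continuous_exp.comp (continuous_id.sub continuous_const)).integrableOn_Ioc
  rw [← ofReal_integral_eq_lintegral_ofReal hint (ae_of_all _ fun σ => (exp_pos _).le),
    ← intervalIntegral.integral_of_le har, intervalIntegral.integral_comp_sub_right,
    integral_exp, sub_self, exp_zero]

theorem rpow_le_two_mul_rpow {α r σ : ℝ} (hα : -1 ≤ α) (hr : 0 < r) (hσ : r / 2 ≤ σ)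
    (hσr : σ ≤ r) : σ ^ α ≤ 2 * r ^ α := by
  have hσ0 : 0 < σ := by linarith
  have hratio : (σ / r) ^ α ≤ 2 := calc
    (σ / r) ^ α ≤ (σ / r) ^ (-1 : ℝ) :=
      rpow_le_rpow_of_exponent_ge (by positivity) ((div_le_one hr).2 hσr) hα
    _ = r / σ := by rw [rpow_neg_one, inv_div]
    _ ≤ 2 := (div_le_iff₀ hσ0).2 (by linarith)
  calc σ ^ α = r ^ α * (σ / r) ^ α := by
        rw [← mul_rpow hr.le (by positivity), mul_div_cancel₀ _ hr.ne']
    _ ≤ r ^ α * 2 := by gcongr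
    _ = 2 * r ^ α := mul_comm _ _

theorem lintegral_Ioc_zero_half_rpow_mul_exp_sub_le {α r : ℝ} (hα : -1 < α) (hr : 0 < r) :
    ∫⁻ σ in Ioc 0 (r / 2), ENNReal.ofReal (σ ^ α * exp (σ - r)) ≤
      ENNReal.ofReal (2 / (α + 1) * (r ^ α * min r 1)) := by
  have hα' : 0 < α + 1 := by linarith
  have hmin : r / 2 * exp (-(r / 2)) ≤ min r 1 := by
    refine le_min ?_ ?_
    · nlinarith [exp_le_one_iff.2 (by linarith : -(r / 2) ≤ 0), exp_pos (-(r / 2))]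
    · rw [exp_neg, ← div_eq_mul_inv, div_le_one (exp_pos _)]
      linarith [add_one_le_exp (r / 2)]
  calc ∫⁻ σ in Ioc 0 (r / 2), ENNReal.ofReal (σ ^ α * exp (σ - r))
      ≤ ∫⁻ σ in Ioc 0 (r / 2), ENNReal.ofReal (σ ^ α) * ENNReal.ofReal (exp (-(r / 2))) := by
        refine setLIntegral_mono' measurableSet_Ioc fun σ hσ => ?_
        rw [← ENNReal.ofReal_mul (rpow_nonneg hσ.1.le _)]
        exact ENNReal.ofReal_le_ofReal (mul_le_mul_of_nonneg_left
          (exp_le_exp.2 (by linarith [hσ.2])) (rpow_nonneg hσ.1.le _))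
    _ = ENNReal.ofReal ((r / 2) ^ α * (r / 2 * exp (-(r / 2))) / (α + 1)) := by
        rw [lintegral_mul_const' _ _ ENNReal.ofReal_ne_top, lintegral_Ioc_rpow (by linarith) hα,
          ← ENNReal.ofReal_mul (div_nonneg (rpow_nonneg (by linarith) _) hα'.le),
          rpow_add (by linarith), rpow_one]
        congr 1
        ring
    _ ≤ ENNReal.ofReal (2 * r ^ α * min r 1 / (α + 1)) := by
        gcongr
        exact rpow_le_two_mul_rpow hα.le hr le_rfl (by linarith)
    _ = ENNReal.ofReal (2 / (α + 1) * (r ^ α * min r 1)) := by ring_nf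

theorem lintegral_Ioc_half_self_rpow_mul_exp_sub_le {α r : ℝ} (hα : -1 ≤ α) (hr : 0 < r) :
    ∫⁻ σ in Ioc (r / 2) r, ENNReal.ofReal (σ ^ α * exp (σ - r)) ≤
      ENNReal.ofReal (2 * (r ^ α * min r 1)) := by
  have hmin : 1 - exp (r / 2 - r) ≤ min r 1 :=
    le_min (by linarith [add_one_le_exp (r / 2 - r)]) (by linarith [exp_pos (r / 2 - r)])
  calc ∫⁻ σ in Ioc (r / 2) r, ENNReal.ofReal (σ ^ α * exp (σ - r))
      ≤ ∫⁻ σ in Ioc (r / 2) r, ENNReal.ofReal (2 * r ^ α) * ENNReal.ofReal (exp (σ - r)) := by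
        refine setLIntegral_mono' measurableSet_Ioc fun σ hσ => ?_
        rw [← ENNReal.ofReal_mul (by positivity)]
        gcongr
        exact rpow_le_two_mul_rpow hα hr hσ.1.le hσ.2
    _ = ENNReal.ofReal (2 * r ^ α * (1 - exp (r / 2 - r))) := by
        rw [lintegral_const_mul' _ _ ENNReal.ofReal_ne_top, lintegral_Ioc_exp_sub (by linarith),
          ← ENNReal.ofReal_mul (by positivity)]
    _ ≤ ENNReal.ofReal (2 * (r ^ α * min r 1)) := by
        rw [← mul_assoc]
        gcongr

theorem lintegral_Ioc_rpow_mul_exp_sub_le {α r : ℝ} (hα : -1 < α) (hr : 0 < r) :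
    ∫⁻ σ in Ioc 0 r, ENNReal.ofReal (σ ^ α * exp (σ - r)) ≤
      ENNReal.ofReal ((2 / (α + 1) + 2) * (r ^ α * min r 1)) := by
  have hα' : 0 < α + 1 := by linarith
  rw [← Ioc_union_Ioc_eq_Ioc (by linarith : 0 ≤ r / 2) (by linarith : r / 2 ≤ r),
    lintegral_union measurableSet_Ioc (Ioc_disjoint_Ioc_of_le le_rfl), add_mul,
    ENNReal.ofReal_add (by positivity) (by positivity)]
  exact add_le_add (lintegral_Ioc_zero_half_rpow_mul_exp_sub_le hα hr)
    (lintegral_Ioc_half_self_rpow_mul_exp_sub_le hα.le hr)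

theorem lintegral_Ioi_rpow_mul_min_mul_exp_sub_le {β σ : ℝ} (hβ : -2 < β) (hβ0 : β ≤ 0)
    (hσ : 0 < σ) :
    ∫⁻ r in Ioi σ, ENNReal.ofReal (r ^ β * min r 1) * ENNReal.ofReal (exp (σ - r)) ≤
      ENNReal.ofReal (1 / (β + 2) + 1) := by
  have hβ2 : 0 < β + 2 := by linarith
  set h : ℝ → ℝ≥0∞ := (Ioc 0 1).indicator fun r => ENNReal.ofReal (r ^ (β + 1))
  have hpt : ∀ r ∈ Ioi σ, ENNReal.ofReal (r ^ β * min r 1) * ENNReal.ofReal (exp (σ - r)) ≤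
      h r + ENNReal.ofReal (exp (σ - r)) := by
    intro r hr
    have hr0 : 0 < r := hσ.trans hr
    rcases le_or_gt r 1 with hr1 | hr1
    · have hexp : exp (σ - r) ≤ 1 := exp_le_one_iff.2 (by linarith [mem_Ioi.1 hr])
      refine le_add_right ?_
      have hrh : h r = ENNReal.ofReal (r ^ (β + 1)) :=
        indicator_of_mem (show r ∈ Ioc 0 1 from ⟨hr0, hr1⟩) _
      rw [← ENNReal.ofReal_mul (by positivity), hrh, min_eq_left hr1, rpow_add_one hr0.ne']
      exact ENNReal.ofReal_le_ofReal (mul_le_of_le_one_right (by positivity) hexp)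
    · refine le_add_left ?_
      rw [min_eq_right hr1.le, mul_one]
      exact mul_le_of_le_one_left'
        (ENNReal.ofReal_le_one.2 (rpow_le_one_of_one_le_of_nonpos hr1.le hβ0))
  calc ∫⁻ r in Ioi σ, ENNReal.ofReal (r ^ β * min r 1) * ENNReal.ofReal (exp (σ - r))
      ≤ ∫⁻ r in Ioi σ, (h r + ENNReal.ofReal (exp (σ - r))) :=
        setLIntegral_mono' measurableSet_Ioi hpt
    _ ≤ (∫⁻ r, h r) + 1 := by
        rw [lintegral_add_right _ (by fun_prop), lintegral_Ioi_exp_sub]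
        gcongr
        exact Measure.restrict_le_self
    _ = ENNReal.ofReal (1 / (β + 2) + 1) := by
        rw [lintegral_indicator measurableSet_Ioc, lintegral_Ioc_rpow one_pos (by linarith),
          one_rpow, ENNReal.ofReal_add (by positivity) zero_le_one, ENNReal.ofReal_one]
        ring_nf

theorem sq_lintegral_Ioc_enorm_sq_mul_exp_sub_mul_le {f : ℝ → ℝ} (hf : Measurable f)
    {α v r : ℝ} (hα : -1 < α) (hαv : α + v = 4) (hr : 0 < r) :
    (∫⁻ σ in Ioc 0 r, ‖σ ^ 2 * exp (σ - r) * f σ‖ₑ) ^ 2 ≤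
      ENNReal.ofReal ((2 / (α + 1) + 2) * (r ^ α * min r 1)) *
        ∫⁻ σ in Ioc 0 r, ENNReal.ofReal (exp (σ - r)) * ENNReal.ofReal (|f σ| ^ 2 * σ ^ v) := by
  have hpt : ∀ᵐ σ ∂volume.restrict (Ioc 0 r), ‖σ ^ 2 * exp (σ - r) * f σ‖ₑ ^ 2 ≤
      ENNReal.ofReal (σ ^ α * exp (σ - r)) *
        (ENNReal.ofReal (exp (σ - r)) * ENNReal.ofReal (|f σ| ^ 2 * σ ^ v)) := by
    filter_upwards [ae_restrict_mem measurableSet_Ioc] with σ hσ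
    obtain ⟨hσ, -⟩ := hσ
    have hσαv : σ ^ α * σ ^ v = σ ^ 4 := by
      rw [← rpow_add hσ, hαv]; norm_cast
    rw [enorm_eq_ofReal_abs, ← ENNReal.ofReal_pow (abs_nonneg _),
      ← ENNReal.ofReal_mul (by positivity), ← ENNReal.ofReal_mul (by positivity)]
    refine le_of_eq (congrArg ENNReal.ofReal ?_)
    simp only [sq_abs]
    linear_combination (-(exp (σ - r) ^ 2 * f σ ^ 2)) * hσαv
  calc (∫⁻ σ in Ioc 0 r, ‖σ ^ 2 * exp (σ - r) * f σ‖ₑ) ^ 2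
      ≤ (∫⁻ σ in Ioc 0 r, ENNReal.ofReal (σ ^ α * exp (σ - r))) *
        ∫⁻ σ in Ioc 0 r, ENNReal.ofReal (exp (σ - r)) * ENNReal.ofReal (|f σ| ^ 2 * σ ^ v) :=
      lintegral_sq_le_mul_of_sq_le (by fun_prop) (by fun_prop) hpt
    _ ≤ _ := by
      gcongr
      exact lintegral_Ioc_rpow_mul_exp_sub_le hα hr

theorem ofReal_sq_abs_calL_mul_rpow_le {f : ℝ → ℝ} (hf : Measurable f) {α v r : ℝ}
    (hα : -1 < α) (hαv : α + v = 4) (hr : 0 < r) (s : ℝ) :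
    ENNReal.ofReal (|calL f r| ^ 2 * r ^ s) ≤ ENNReal.ofReal (2 / (α + 1) + 2) *
      (ENNReal.ofReal (r ^ (α + s - 6) * min r 1) *
        ∫⁻ σ in Ioc 0 r, ENNReal.ofReal (exp (σ - r)) * ENNReal.ofReal (|f σ| ^ 2 * σ ^ v)) := by
  have hα' : 0 < α + 1 := by linarith
  set I := ∫ σ in Ioc 0 r, σ ^ 2 * exp (σ - r) * f σ
  have hcalL : |calL f r| ^ 2 * r ^ s = I ^ 2 * r ^ (s - 6) := by
    rw [calL, sq_abs, rpow_sub hr, rpow_ofNat]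
    field_simp
    ring
  have hpow : r ^ α * min r 1 * r ^ (s - 6) = r ^ (α + s - 6) * min r 1 := by
    rw [add_sub_assoc, rpow_add hr]; ring
  calc ENNReal.ofReal (|calL f r| ^ 2 * r ^ s)
      = ‖I‖ₑ ^ 2 * ENNReal.ofReal (r ^ (s - 6)) := by
        rw [hcalL, ENNReal.ofReal_mul (sq_nonneg _), enorm_eq_ofReal_abs,
          ← ENNReal.ofReal_pow (abs_nonneg _), sq_abs]
    _ ≤ (∫⁻ σ in Ioc 0 r, ‖σ ^ 2 * exp (σ - r) * f σ‖ₑ) ^ 2 * ENNReal.ofReal (r ^ (s - 6)) := by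
        gcongr
        exact enorm_integral_le_lintegral_enorm _
    _ ≤ ENNReal.ofReal ((2 / (α + 1) + 2) * (r ^ α * min r 1)) *
        (∫⁻ σ in Ioc 0 r, ENNReal.ofReal (exp (σ - r)) * ENNReal.ofReal (|f σ| ^ 2 * σ ^ v)) *
          ENNReal.ofReal (r ^ (s - 6)) := by
        gcongr
        exact sq_lintegral_Ioc_enorm_sq_mul_exp_sub_mul_le hf hα hαv hr
    _ = _ := by
        rw [← hpow, ENNReal.ofReal_mul (p := 2 / (α + 1) + 2) (by positivity),
          ENNReal.ofReal_mul (p := r ^ α * min r 1) (by positivity)]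
        ring

theorem integrableOn_Ioc_sq_mul_exp_sub_mul_of_lintegral_lt_top {f : ℝ → ℝ} (hf : Measurable f)
    {α v r : ℝ} (hα : -1 < α) (hαv : α + v = 4) (hr : 0 < r)
    (hK : ∫⁻ σ in Ioi 0, ENNReal.ofReal (|f σ| ^ 2 * σ ^ v) < ⊤) :
    IntegrableOn (fun σ => σ ^ 2 * exp (σ - r) * f σ) (Ioc 0 r) := by
  refine ⟨(by fun_prop : Measurable _).aestronglyMeasurable, ?_⟩
  have hB : ∫⁻ σ in Ioc 0 r, ENNReal.ofReal (exp (σ - r)) * ENNReal.ofReal (|f σ| ^ 2 * σ ^ v)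
      < ⊤ := by
    refine lt_of_le_of_lt ?_ hK
    calc _ ≤ ∫⁻ σ in Ioc 0 r, ENNReal.ofReal (|f σ| ^ 2 * σ ^ v) :=
          setLIntegral_mono' measurableSet_Ioc fun σ hσ =>
            mul_le_of_le_one_left' (ENNReal.ofReal_le_one.2 (exp_le_one_iff.2 (by linarith [hσ.2])))
      _ ≤ _ := lintegral_mono_set Ioc_subset_Ioi_self
  have hsq := (sq_lintegral_Ioc_enorm_sq_mul_exp_sub_mul_le hf hα hαv hr).trans_lt
    (ENNReal.mul_lt_top ENNReal.ofReal_lt_top hB)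
  exact (ENNReal.pow_lt_top_iff.1 hsq).resolve_right two_ne_zero

/-- For `t₁ ∈ [1,2)` and `t ∈ (t₁, t₁+1]` there is `C = C(t₁,t)` so
that for every measurable `f` with `∫₀^∞ |f(r)|² r^{1+2t₁} dr < ∞`, `𝓛[f]` is well
defined a.e. and `∫₀^∞ |𝓛[f](r)|² r^{1+2t} dr ≤ C ∫₀^∞ |f(r)|² r^{1+2t₁} dr`. -/
theorem statement_14 (t₁ t : ℝ) (ht₁ : t₁ ∈ Set.Ico (1 : ℝ) 2)
    (ht : t ∈ Set.Ioc t₁ (t₁ + 1)) :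
    ∃ C > (0 : ℝ), ∀ f : ℝ → ℝ, Measurable f →
      (∫⁻ r in Set.Ioi (0 : ℝ), ENNReal.ofReal (|f r| ^ 2 * r ^ (1 + 2 * t₁))) < ⊤ →
      (∀ᵐ r ∂(volume.restrict (Set.Ioi (0 : ℝ))),
        IntegrableOn (fun σ => σ ^ 2 * Real.exp (σ - r) * f σ) (Set.Ioc (0 : ℝ) r)) ∧
      (∫⁻ r in Set.Ioi (0 : ℝ), ENNReal.ofReal (|calL f r| ^ 2 * r ^ (1 + 2 * t))) ≤
        ENNReal.ofReal C *
          ∫⁻ r in Set.Ioi (0 : ℝ), ENNReal.ofReal (|f r| ^ 2 * r ^ (1 + 2 * t₁)) := by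
  obtain ⟨-, ht₁2⟩ := ht₁
  obtain ⟨htl, htr⟩ := ht
  set α := 3 - 2 * t₁
  set β := α + (1 + 2 * t) - 6
  have hα : -1 < α := by linarith
  have hαv : α + (1 + 2 * t₁) = 4 := by ring
  have hβ : -2 < β := by linarith
  have hβ0 : β ≤ 0 := by linarith
  have hc₁ : 0 < 2 / (α + 1) + 2 := add_pos (div_pos two_pos (by linarith)) two_pos
  have hc₂ : 0 < 1 / (β + 2) + 1 := add_pos (div_pos one_pos (by linarith)) one_pos
  refine ⟨(2 / (α + 1) + 2) * (1 / (β + 2) + 1), mul_pos hc₁ hc₂, fun f hf hK => ⟨?_, ?_⟩⟩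
  · filter_upwards [ae_restrict_mem measurableSet_Ioi] with r hr
    exact integrableOn_Ioc_sq_mul_exp_sub_mul_of_lintegral_lt_top hf hα hαv hr hK
  calc ∫⁻ r in Ioi 0, ENNReal.ofReal (|calL f r| ^ 2 * r ^ (1 + 2 * t))
      ≤ ∫⁻ r in Ioi 0, ENNReal.ofReal (2 / (α + 1) + 2) * (ENNReal.ofReal (r ^ β * min r 1) *
          ∫⁻ σ in Ioc 0 r, ENNReal.ofReal (exp (σ - r)) *
            ENNReal.ofReal (|f σ| ^ 2 * σ ^ (1 + 2 * t₁))) :=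
        setLIntegral_mono' measurableSet_Ioi fun r hr =>
          ofReal_sq_abs_calL_mul_rpow_le hf hα hαv hr _
    _ ≤ ENNReal.ofReal (2 / (α + 1) + 2) * (ENNReal.ofReal (1 / (β + 2) + 1) *
          ∫⁻ σ in Ioi 0, ENNReal.ofReal (|f σ| ^ 2 * σ ^ (1 + 2 * t₁))) := by
        rw [lintegral_const_mul' _ _ ENNReal.ofReal_ne_top]
        gcongr
        exact lintegral_Ioi_mul_lintegral_Ioc_le (by fun_prop) (by fun_prop) (by fun_prop)
          fun σ hσ => lintegral_Ioi_rpow_mul_min_mul_exp_sub_le hβ hβ0 hσ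
    _ = _ := by rw [ENNReal.ofReal_mul hc₁.le, mul_assoc]
end
end
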